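/- Fix (Δ_1, τ) with Δ_1 ≠ 0 or τ ≠ I_p, bounded. If a sequence of mixture probabilities satisfies π_1^{(n)} → 1 or π_2^{(n)} → 1, then the standardized score T^{(1)} (with either hard or soft assignment) converges in probability to the standard normal vector Z used in generating the observation. -/

import Mathlib

open Matrix MeasureTheory ProbabilityTheory Filter

/-- Multivariate Gaussian density `φ(y; μ, Σ)` on `ℝ^p`. -/
noncomputable def gphi (p : ℕ) (μ : Fin p → ℝ) (Sig : Matrix (Fin p) (Fin p) ℝ)
    (y : Fin p → ℝ) : ℝ :=
  (2 * Real.pi) ^ (-(p : ℝ) / 2) * Sig.det ^ (-(1 : ℝ) / 2)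
    * Real.exp (-((y - μ) ⬝ᵥ Sig⁻¹.mulVec (y - μ)) / 2)

/-- Posterior probability `w₁ = π₁ φ₁(y)/(π₁ φ₁(y) + π₂ φ₂(y))` of class 1. -/
noncomputable def wpost (p : ℕ) (μ₁ μ₂ : Fin p → ℝ)
    (Sig₁ Sig₂ : Matrix (Fin p) (Fin p) ℝ) (π₁ π₂ : ℝ) (y : Fin p → ℝ) : ℝ :=
  π₁ * gphi p μ₁ Sig₁ y / (π₁ * gphi p μ₁ Sig₁ y + π₂ * gphi p μ₂ Sig₂ y)

/-- Standardized score `T⁽¹⁾ = (ŝ₁ Σ₁^{-1/2} + ŝ₂ Σ₂^{-1/2})(y - ŝ₁ μ₁ - ŝ₂ μ₂)`,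
with `ŝ₂ = 1 - ŝ₁` and `S i = Σ_i^{1/2}`. -/
noncomputable def Tstd (p : ℕ) (μ₁ μ₂ : Fin p → ℝ)
    (S₁ S₂ : Matrix (Fin p) (Fin p) ℝ) (s1 : ℝ) (y : Fin p → ℝ) : Fin p → ℝ :=
  (s1 • S₁⁻¹ + (1 - s1) • S₂⁻¹).mulVec (y - s1 • μ₁ - (1 - s1) • μ₂)

/-! As the weight of one component tends to one, the observation comes from that component,
say `Y = S₁ Z + μ₁`, with probability tending to one. On that event
`T⁽¹⁾ - Z = (1 - ŝ₁) v`, where `v` is bounded by a fixed function of `Z`, while both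
assignments satisfy `1 - ŝ₁ ≤ 2 (1 - w₁) ≤ 2 (π₂ / π₁) φ₂(Y) / φ₁(Y)`. Hence `‖T⁽¹⁾ - Z‖` is
dominated by a null sequence of constants times a fixed finite random variable. The other
limit is the same statement with the two components exchanged. -/

namespace MeasureTheory

variable {Ω : Type*} [MeasurableSpace Ω] {μ : Measure Ω}

theorem tendstoInMeasure_mul_of_tendsto_zero [IsFiniteMeasure μ] {a : ℕ → ℝ}
    (ha : Tendsto a atTop (nhds 0)) {R : Ω → ℝ} (hR : AEStronglyMeasurable R μ) :
    TendstoInMeasure μ (fun n ω => a n * R ω) atTop 0 :=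
  tendstoInMeasure_of_tendsto_ae (fun n => hR.const_mul (a n))
    (ae_of_all μ fun ω => by simpa using ha.mul_const (R ω))

theorem TendstoInMeasure.of_dist_le_of_tendsto_measure {ι E : Type*} [PseudoMetricSpace E]
    {l : Filter ι} {f : ι → Ω → E} {g : Ω → E} {h : ι → Ω → ℝ}
    (hh : TendstoInMeasure μ h l 0) {A : ι → Set Ω} (hA : Tendsto (fun i => μ (A i)) l (nhds 0))
    (hle : ∀ i, ∀ ω ∉ A i, dist (f i ω) (g ω) ≤ h i ω) :
    TendstoInMeasure μ f l g := by
  rw [tendstoInMeasure_iff_dist] at hh ⊢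
  simp only [Pi.zero_apply, Real.dist_0_eq_abs] at hh
  intro ε hε
  have hsub : ∀ i, {ω | ε ≤ dist (f i ω) (g ω)} ⊆ A i ∪ {ω | ε ≤ |h i ω|} :=
    fun i ω hω => or_iff_not_imp_left.2 fun hωA => (hω.trans (hle i ω hωA)).trans (le_abs_self _)
  refine tendsto_of_tendsto_of_tendsto_of_le_of_le tendsto_const_nhds
    (by simpa only [add_zero] using hA.add (hh ε hε)) (fun _ => bot_le) fun i => ?_
  exact (measure_mono (hsub i)).trans (measure_union_le _ _)

end MeasureTheory

theorem assignment_bounds {w s : ℝ} (hw : w ∈ Set.Icc 0 1)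
    (hs : s = (if 1 / 2 < w then 1 else 0) ∨ s = w) :
    s ∈ Set.Icc 0 1 ∧ 1 - s ≤ 2 * (1 - w) ∧ s ≤ 2 * w := by
  obtain ⟨hw₀, hw₁⟩ := hw
  rcases hs with rfl | rfl
  · split_ifs with h <;> refine ⟨⟨?_, ?_⟩, ?_, ?_⟩ <;> linarith
  · exact ⟨⟨hw₀, hw₁⟩, by linarith, by linarith⟩

section GaussianMixture

variable {p : ℕ}

theorem gphi_pos (μ : Fin p → ℝ) {Sig : Matrix (Fin p) (Fin p) ℝ} (h : Sig.PosDef)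
    (y : Fin p → ℝ) : 0 < gphi p μ Sig y := by
  have := h.det_pos
  unfold gphi
  positivity

theorem measurable_gphi (μ : Fin p → ℝ) (Sig : Matrix (Fin p) (Fin p) ℝ) :
    Measurable (gphi p μ Sig) := by
  unfold gphi
  fun_prop

variable {μ₁ μ₂ : Fin p → ℝ} {Sig₁ Sig₂ : Matrix (Fin p) (Fin p) ℝ}

theorem wpost_mem_Icc (h₁ : Sig₁.PosDef) (h₂ : Sig₂.PosDef) {a b : ℝ} (ha : 0 ≤ a)
    (hb : 0 ≤ b) (y : Fin p → ℝ) : wpost p μ₁ μ₂ Sig₁ Sig₂ a b y ∈ Set.Icc 0 1 := by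
  have := gphi_pos μ₁ h₁ y
  have := gphi_pos μ₂ h₂ y
  unfold wpost
  exact ⟨by positivity, div_le_one_of_le₀ (by nlinarith) (by positivity)⟩

theorem wpost_le (h₁ : Sig₁.PosDef) (h₂ : Sig₂.PosDef) {a b : ℝ} (ha : 0 ≤ a) (hb : 0 < b)
    (y : Fin p → ℝ) :
    wpost p μ₁ μ₂ Sig₁ Sig₂ a b y ≤ a / b * (gphi p μ₁ Sig₁ y / gphi p μ₂ Sig₂ y) := by
  have := gphi_pos μ₁ h₁ y
  have := gphi_pos μ₂ h₂ y
  rw [wpost, div_mul_div_comm]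
  exact div_le_div_of_nonneg_left (by positivity) (by positivity) (by nlinarith)

theorem one_sub_wpost_le (h₁ : Sig₁.PosDef) (h₂ : Sig₂.PosDef) {a b : ℝ} (ha : 0 < a)
    (hb : 0 ≤ b) (y : Fin p → ℝ) :
    1 - wpost p μ₁ μ₂ Sig₁ Sig₂ a b y ≤ b / a * (gphi p μ₂ Sig₂ y / gphi p μ₁ Sig₁ y) := by
  have := gphi_pos μ₁ h₁ y
  have := gphi_pos μ₂ h₂ y
  have hsum : a * gphi p μ₁ Sig₁ y + b * gphi p μ₂ Sig₂ y ≠ 0 := by positivity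
  rw [wpost, one_sub_div hsum, add_sub_cancel_left, div_mul_div_comm]
  exact div_le_div_of_nonneg_left (by positivity) (by positivity) (by nlinarith)

theorem wpost_assignment_bounds (h₁ : Sig₁.PosDef) (h₂ : Sig₂.PosDef) {a b : ℝ} (ha : 0 < a)
    (hb : 0 < b) {y : Fin p → ℝ} {s : ℝ}
    (hs : s = (if 1 / 2 < wpost p μ₁ μ₂ Sig₁ Sig₂ a b y then 1 else 0)
      ∨ s = wpost p μ₁ μ₂ Sig₁ Sig₂ a b y) :
    s ∈ Set.Icc 0 1
      ∧ 1 - s ≤ 2 * (b / a) * (gphi p μ₂ Sig₂ y / gphi p μ₁ Sig₁ y)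
      ∧ s ≤ 2 * (a / b) * (gphi p μ₁ Sig₁ y / gphi p μ₂ Sig₂ y) := by
  obtain ⟨hs01, h1s, hs2⟩ := assignment_bounds (wpost_mem_Icc h₁ h₂ ha.le hb.le y) hs
  refine ⟨hs01, ?_, ?_⟩ <;> rw [mul_assoc]
  · exact h1s.trans (by gcongr; exact one_sub_wpost_le h₁ h₂ ha hb.le y)
  · exact hs2.trans (by gcongr; exact wpost_le h₁ h₂ ha.le hb y)

variable {S₁ S₂ : Matrix (Fin p) (Fin p) ℝ}

theorem Tstd_swap (s : ℝ) (y : Fin p → ℝ) :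
    Tstd p μ₂ μ₁ S₂ S₁ (1 - s) y = Tstd p μ₁ μ₂ S₁ S₂ s y := by
  unfold Tstd
  rw [sub_sub_cancel, add_comm, sub_right_comm]

theorem Tstd_sub_eq (hS₁ : IsUnit S₁.det) (s : ℝ) (z : Fin p → ℝ) :
    Tstd p μ₁ μ₂ S₁ S₂ s (S₁ *ᵥ z + μ₁) - z
      = (1 - s) • ((S₂⁻¹ * S₁ - 1) *ᵥ z + s • S₁⁻¹ *ᵥ (μ₁ - μ₂)
          + (1 - s) • S₂⁻¹ *ᵥ (μ₁ - μ₂)) := by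
  unfold Tstd
  simp only [Matrix.add_mul, Matrix.smul_mul, Matrix.add_mulVec, Matrix.sub_mulVec,
    Matrix.smul_mulVec, Matrix.mulVec_add, Matrix.mulVec_sub, Matrix.mulVec_smul,
    Matrix.mulVec_mulVec, nonsing_inv_mul _ hS₁, Matrix.one_mulVec]
  module

theorem dist_Tstd_le (hS₁ : IsUnit S₁.det) {s : ℝ} (hs : s ∈ Set.Icc 0 1) (z : Fin p → ℝ) :
    dist (Tstd p μ₁ μ₂ S₁ S₂ s (S₁ *ᵥ z + μ₁)) z
      ≤ (1 - s) * (‖(S₂⁻¹ * S₁ - 1) *ᵥ z‖ + ‖S₁⁻¹ *ᵥ (μ₁ - μ₂)‖ + ‖S₂⁻¹ *ᵥ (μ₁ - μ₂)‖) := by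
  obtain ⟨hs₀, hs₁⟩ := hs
  have h1s : 0 ≤ 1 - s := by linarith
  rw [dist_eq_norm, Tstd_sub_eq hS₁, norm_smul, Real.norm_of_nonneg h1s]
  refine mul_le_mul_of_nonneg_left (norm_add₃_le.trans (add_le_add (add_le_add le_rfl ?_) ?_)) h1s
  all_goals
    rw [norm_smul, Real.norm_eq_abs]
    exact mul_le_of_le_one_left (norm_nonneg _) (abs_le.2 ⟨by linarith, by linarith⟩)

theorem tendstoInMeasure_Tstd {Ω : Type*} [MeasurableSpace Ω] {P : Measure Ω}
    [IsFiniteMeasure P] (hS₁ : IsUnit S₁.det) {Z : Ω → Fin p → ℝ} (hZ : Measurable Z)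
    {Y : ℕ → Ω → Fin p → ℝ} {A : ℕ → Set Ω} (hA : Tendsto (fun n => P (A n)) atTop (nhds 0))
    (hY : ∀ n, ∀ ω ∉ A n, Y n ω = S₁ *ᵥ Z ω + μ₁)
    {s : ℕ → (Fin p → ℝ) → ℝ} (hs : ∀ n y, s n y ∈ Set.Icc 0 1)
    {b : ℕ → ℝ} (hb : Tendsto b atTop (nhds 0)) {ρ : (Fin p → ℝ) → ℝ} (hρ : Measurable ρ)
    (hsρ : ∀ n y, 1 - s n y ≤ b n * ρ y) :
    TendstoInMeasure P (fun n ω => Tstd p μ₁ μ₂ S₁ S₂ (s n (Y n ω)) (Y n ω)) atTop Z := by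
  set V : (Fin p → ℝ) → ℝ :=
    fun z => ‖(S₂⁻¹ * S₁ - 1) *ᵥ z‖ + ‖S₁⁻¹ *ᵥ (μ₁ - μ₂)‖ + ‖S₂⁻¹ *ᵥ (μ₁ - μ₂)‖
  have hR : Measurable fun ω => ρ (S₁ *ᵥ Z ω + μ₁) * V (Z ω) := by fun_prop
  refine TendstoInMeasure.of_dist_le_of_tendsto_measure
    (tendstoInMeasure_mul_of_tendsto_zero hb hR.aestronglyMeasurable) hA fun n ω hω => ?_
  rw [hY n ω hω, ← mul_assoc]
  exact (dist_Tstd_le hS₁ (hs n _) _).trans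
    (mul_le_mul_of_nonneg_right (hsρ n _) (by positivity))

end GaussianMixture

theorem stmt6_general {Ω : Type*} [MeasurableSpace Ω] (P : Measure Ω) [IsProbabilityMeasure P]
    (p : ℕ) (μ₁ μ₂ : Fin p → ℝ)
    (Sig₁ Sig₂ S₁ S₂ : Matrix (Fin p) (Fin p) ℝ)
    (hSig₁ : Sig₁.PosDef) (hSig₂ : Sig₂.PosDef)
    (hS₁ : S₁.PosDef) (hS₂ : S₂.PosDef)
    (π₁ : ℕ → ℝ) (hπ : ∀ n, π₁ n ∈ Set.Ioo (0 : ℝ) 1)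
    (Z : Ω → Fin p → ℝ) (c : ℕ → Ω → Fin 2)
    (hZmeas : Measurable Z) (hcmeas : ∀ n, Measurable (c n))
    (hc : ∀ n, P {ω | c n ω = 1} = ENNReal.ofReal (π₁ n))
    (Y : ℕ → Ω → Fin p → ℝ)
    (hY : ∀ n ω, Y n ω = if c n ω = 1 then S₁.mulVec (Z ω) + μ₁ else S₂.mulVec (Z ω) + μ₂)
    (s1 : ℕ → (Fin p → ℝ) → ℝ)
    -- `s1` is the hard assignment or the soft assignment:
    (hassign :
      (∀ n, s1 n = fun y =>
        if 1 / 2 < wpost p μ₁ μ₂ Sig₁ Sig₂ (π₁ n) (1 - π₁ n) y then 1 else 0)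
      ∨ (∀ n, s1 n = fun y => wpost p μ₁ μ₂ Sig₁ Sig₂ (π₁ n) (1 - π₁ n) y))
    (hlim : Tendsto π₁ atTop (nhds 1) ∨ Tendsto π₁ atTop (nhds 0)) :
    TendstoInMeasure P (fun n ω => Tstd p μ₁ μ₂ S₁ S₂ (s1 n (Y n ω)) (Y n ω)) atTop Z := by
  have hs := fun n y => wpost_assignment_bounds hSig₁ hSig₂ (hπ n).1 (sub_pos.2 (hπ n).2)
    (hassign.imp (fun h => congrFun (h n) y) fun h => congrFun (h n) y)
  rcases hlim with hlim | hlim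
  · have h1π : Tendsto (fun n => 1 - π₁ n) atTop (nhds 0) := by simpa using hlim.const_sub 1
    have hc' : ∀ n, P {ω | c n ω = 1}ᶜ = ENNReal.ofReal (1 - π₁ n) := fun n => by
      have hmeas : MeasurableSet {ω | c n ω = 1} := hcmeas n (measurableSet_singleton 1)
      rw [prob_compl_eq_one_sub hmeas, hc n, ENNReal.ofReal_sub _ (hπ n).1.le, ENNReal.ofReal_one]
    exact tendstoInMeasure_Tstd (A := fun n => {ω | c n ω = 1}ᶜ)
      (isUnit_iff_ne_zero.2 hS₁.det_pos.ne') hZmeas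
      (by simpa only [hc', ENNReal.ofReal_zero] using ENNReal.tendsto_ofReal h1π)
      (fun n ω hω => by rw [hY, if_pos (not_not.1 hω : c n ω = 1)]) (fun n y => (hs n y).1)
      (by simpa using (h1π.div hlim one_ne_zero).const_mul 2)
      ((measurable_gphi μ₂ Sig₂).div (measurable_gphi μ₁ Sig₁)) fun n y => (hs n y).2.1
  · have h1π : Tendsto (fun n => 1 - π₁ n) atTop (nhds 1) := by simpa using hlim.const_sub 1
    have hswap := tendstoInMeasure_Tstd (P := P) (μ₁ := μ₂) (μ₂ := μ₁) (S₂ := S₁) (Y := Y)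
      (A := fun n => {ω | c n ω = 1}) (s := fun n y => 1 - s1 n y)
      (isUnit_iff_ne_zero.2 hS₂.det_pos.ne') hZmeas
      (by simpa only [hc, ENNReal.ofReal_zero] using ENNReal.tendsto_ofReal hlim)
      (fun n ω hω => by rw [hY, if_neg]; exact hω)
      (fun n y => ⟨sub_nonneg.2 (hs n y).1.2, sub_le_self _ (hs n y).1.1⟩)
      (by simpa using (hlim.div h1π one_ne_zero).const_mul 2)
      ((measurable_gphi μ₁ Sig₁).div (measurable_gphi μ₂ Sig₂))
      fun n y => by rw [sub_sub_cancel]; exact (hs n y).2.2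
    simpa only [Tstd_swap] using hswap

/-- Theorem 1, part 1: fix `(Δ₁, τ) ∉ Θ₀` (bounded, since fixed).
If the mixture probabilities satisfy `π₁⁽ⁿ⁾ → 1` or `π₂⁽ⁿ⁾ → 1`, then the
standardized score `T⁽¹⁾` (hard or soft assignment) converges in probability to the
standard normal vector `Z` used to generate the observation. -/
theorem stmt6 {Ω : Type*} [MeasurableSpace Ω] (P : Measure Ω) [IsProbabilityMeasure P]
    (p : ℕ) (μ₁ μ₂ : Fin p → ℝ)
    (Sig₁ Sig₂ S₁ S₂ : Matrix (Fin p) (Fin p) ℝ)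
    (hSig₁ : Sig₁.PosDef) (hSig₂ : Sig₂.PosDef)
    (hS₁ : S₁.PosDef) (hS₂ : S₂.PosDef)
    (hsq₁ : S₁ * S₁ = Sig₁) (hsq₂ : S₂ * S₂ = Sig₂)
    -- (Δ₁, τ) ∈ Θ₀ᶜ :
    (hΘ : ¬(S₁⁻¹.mulVec (μ₁ - μ₂) = 0 ∧ S₂⁻¹ * S₁ = 1))
    (π₁ : ℕ → ℝ) (hπ : ∀ n, π₁ n ∈ Set.Ioo (0 : ℝ) 1)
    (Z : Ω → Fin p → ℝ) (c : ℕ → Ω → Fin 2)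
    (hZmeas : Measurable Z) (hcmeas : ∀ n, Measurable (c n))
    (hZ : Measure.map Z P = Measure.pi fun _ : Fin p => gaussianReal 0 1)
    (hc : ∀ n, P {ω | c n ω = 1} = ENNReal.ofReal (π₁ n))
    (hindep : ∀ n, IndepFun Z (c n) P)
    (Y : ℕ → Ω → Fin p → ℝ)
    (hY : ∀ n ω, Y n ω = if c n ω = 1 then S₁.mulVec (Z ω) + μ₁ else S₂.mulVec (Z ω) + μ₂)
    (s1 : ℕ → (Fin p → ℝ) → ℝ)
    -- `s1` is the hard assignment or the soft assignment:
    (hassign :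
      (∀ n, s1 n = fun y =>
        if 1 / 2 < wpost p μ₁ μ₂ Sig₁ Sig₂ (π₁ n) (1 - π₁ n) y then 1 else 0)
      ∨ (∀ n, s1 n = fun y => wpost p μ₁ μ₂ Sig₁ Sig₂ (π₁ n) (1 - π₁ n) y))
    (hlim : Tendsto π₁ atTop (nhds 1) ∨ Tendsto π₁ atTop (nhds 0)) :
    TendstoInMeasure P (fun n ω => Tstd p μ₁ μ₂ S₁ S₂ (s1 n (Y n ω)) (Y n ω)) atTop Z :=
  stmt6_general P p μ₁ μ₂ Sig₁ Sig₂ S₁ S₂ hSig₁ hSig₂ hS₁ hS₂ π₁ hπ Z c hZmeas hcmeas hc Y hY s1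
    hassign hlim
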